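/- arXiv:1807.11701 — 2 statements merged into one kernel-verified Lean document; each statement's English description precedes it below -/
import Mathlib

section
/- For the two-curve problem on [0,1] with S_max(t) = 1 - 0.5t and S_min(t) = 0.5t, and affine approximants S(A,t) = a_0 + a_1 t: the function S(A,t) = 0.5 + k t is an optimal approximation with maximal deviation 0.5 for every k ∈ [−0.25, 0.25]. In particular, the best two-curve Chebyshev approximation need not be unique even for a Chebyshev system. -/
lemma aux_bdd (p : ℝ × ℝ) : BddAbove (Set.range fun t : Set.Icc (0:ℝ) 1 =>
    max ((1 - (t : ℝ) / 2) - (p.1 + p.2 * (t : ℝ)))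
        ((p.1 + p.2 * (t : ℝ)) - (t : ℝ) / 2)) := by
  refine ⟨1 + |p.1| + |p.2|, ?_⟩
  rintro x ⟨t, rfl⟩
  obtain ⟨ht0, ht1⟩ := t.2
  apply max_le
  · nlinarith [neg_abs_le p.1, le_abs_self p.1, neg_abs_le p.2, le_abs_self p.2,
      mul_nonneg (sub_nonneg.2 (neg_abs_le p.2)) ht0, abs_nonneg p.2,
      mul_nonneg (sub_nonneg.2 (neg_abs_le p.2)) (sub_nonneg.2 ht1)]
  · nlinarith [neg_abs_le p.1, le_abs_self p.1, neg_abs_le p.2, le_abs_self p.2,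
      mul_nonneg (sub_nonneg.2 (neg_abs_le p.2)) ht0, abs_nonneg p.2,
      mul_nonneg (sub_nonneg.2 (le_abs_self p.2)) (sub_nonneg.2 ht1),
      mul_nonneg (sub_nonneg.2 (le_abs_self p.2)) ht0]

/-- for S_max(t)=1-t/2, S_min(t)=t/2 on [0,1] and affine approximants,
    every line 1/2 + k t with k ∈ [-1/4,1/4] is optimal with maximal deviation 1/2;
    in particular the best two-curve approximation is not unique. -/
theorem stmt_12
    (Δ : ℝ × ℝ → ℝ)
    (hΔ : ∀ p : ℝ × ℝ, Δ p = ⨆ t : Set.Icc (0:ℝ) 1,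
      max ((1 - (t : ℝ) / 2) - (p.1 + p.2 * (t : ℝ)))
          ((p.1 + p.2 * (t : ℝ)) - (t : ℝ) / 2)) :
    ∀ k ∈ Set.Icc (-(1/4) : ℝ) (1/4),
      Δ (1/2, k) = 1/2 ∧ ∀ p : ℝ × ℝ, Δ (1/2, k) ≤ Δ p := by
  intro k hk
  obtain ⟨hk1, hk2⟩ := hk
  have hmain : Δ (1/2, k) = 1/2 := by
    rw [hΔ]
    apply le_antisymm
    · apply ciSup_le
      intro t
      obtain ⟨ht0, ht1⟩ := t.2
      apply max_le <;> simp only <;> nlinarith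
    · have := le_ciSup (aux_bdd (1/2, k)) (⟨0, by norm_num⟩ : Set.Icc (0:ℝ) 1)
      refine le_trans ?_ this
      norm_num
  refine ⟨hmain, fun p => ?_⟩
  rw [hmain, hΔ p]
  have h0 : max ((1 - ((0:ℝ)) / 2) - (p.1 + p.2 * (0:ℝ)))
      ((p.1 + p.2 * (0:ℝ)) - (0:ℝ) / 2) = max (1 - p.1) p.1 := by norm_num
  have hmax : (1/2 : ℝ) ≤ max (1 - p.1) p.1 := by
    rcases le_or_gt p.1 (1/2) with h | h
    · exact le_max_of_le_left (by linarith)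
    · exact le_max_of_le_right h.le
  calc (1/2 : ℝ) ≤ max (1 - p.1) p.1 := hmax
    _ ≤ _ := by
        have := le_ciSup (aux_bdd p) (⟨0, by norm_num⟩ : Set.Icc (0:ℝ) 1)
        refine le_trans (le_of_eq ?_) this
        norm_num
end

section
/- If 0 lies in the convex hull of a finite set of vectors {±G(t_j)} ⊆ ℝ^{n+1}, then by Carathéodory's theorem 0 is a convex combination of at most n+2 of them; combined with the Chebyshev system property, exactly n+2 points with alternating signs are needed: the minimal number of points t_j involved in such a vanishing nontrivial nonnegative combination is exactly n+2. -/
/-- for a Chebyshev system, the minimal number of points involved in a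
    nontrivial vanishing nonnegative signed combination of the vectors G(t_j) is
    exactly n+2. -/
theorem stmt_16 (a b : ℝ) (hab : a < b) (n : ℕ) (g : Fin (n + 1) → ℝ → ℝ)
    (hg : ∀ t : Fin (n + 1) → ℝ, (∀ i, t i ∈ Set.Icc a b) → StrictMono t →
      (Matrix.of fun i j : Fin (n + 1) => g i (t j)).det ≠ 0) :
    (∀ (m : ℕ) (t : Fin m → ℝ), (∀ j, t j ∈ Set.Icc a b) → StrictMono t →
      ∀ (α : Fin m → ℝ), (∀ j, 0 ≤ α j) → (∃ j, α j ≠ 0) →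
      ∀ (σ : Fin m → ℝ), (∀ j, σ j = 1 ∨ σ j = -1) →
      (∀ i : Fin (n + 1), ∑ j, α j * σ j * g i (t j) = 0) → n + 2 ≤ m) ∧
    (∃ (t : Fin (n + 2) → ℝ), (∀ j, t j ∈ Set.Icc a b) ∧ StrictMono t ∧
      ∃ (α : Fin (n + 2) → ℝ) (σ : Fin (n + 2) → ℝ),
        (∀ j, 0 ≤ α j) ∧ (∃ j, α j ≠ 0) ∧ (∀ j, σ j = 1 ∨ σ j = -1) ∧
        ∀ i : Fin (n + 1), ∑ j, α j * σ j * g i (t j) = 0) := by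
  constructor
  · -- lower bound
    intro m t ht hmono α hα hne σ hσ hsum
    by_contra hlt
    push_neg at hlt
    have hm : m ≤ n + 1 := by omega
    haveI : Infinite ↥(Set.Icc a b) := (Set.Icc_infinite hab).to_subtype
    set t' : Fin m → ↥(Set.Icc a b) := fun j => ⟨t j, ht j⟩ with ht'
    have ht'inj : Function.Injective t' := by
      intro x y hxy
      exact hmono.injective (congrArg Subtype.val hxy)
    have hcard0 : (Finset.image t' Finset.univ).card = m := by
      rw [Finset.card_image_of_injective _ ht'inj, Finset.card_univ, Fintype.card_fin]
    obtain ⟨F, hF0, hFcard⟩ := Infinite.exists_superset_card_eq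
      (Finset.image t' Finset.univ) (n + 1) (by omega)
    set e := F.orderEmbOfFin hFcard with he
    set s : Fin (n + 1) → ℝ := fun k => (e k : ℝ) with hs
    have hsmem : ∀ k, s k ∈ Set.Icc a b := fun k => (e k).2
    have hsmono : StrictMono s := fun x y hxy => e.strictMono hxy
    have hdet := hg s hsmem hsmono
    -- index map
    have hmemF : ∀ j, t' j ∈ F := fun j => hF0 (Finset.mem_image_of_mem _ (Finset.mem_univ j))
    have hrange : ∀ j, ∃ k, e k = t' j := by
      intro j
      have : (t' j : ↥(Set.Icc a b)) ∈ Set.range e := by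
        rw [Finset.range_orderEmbOfFin]
        exact_mod_cast hmemF j
      exact this
    choose φ hφ using hrange
    have hφinj : Function.Injective φ := by
      intro x y hxy
      apply ht'inj
      rw [← hφ x, ← hφ y, hxy]
    set c : Fin m → ℝ := fun j => α j * σ j with hc
    set d : Fin (n + 1) → ℝ := fun k => ∑ j, if φ j = k then c j else 0 with hd
    have hmul : (Matrix.of fun i k : Fin (n + 1) => g i (s k)).mulVec d = 0 := by
      funext i
      simp only [Matrix.mulVec, dotProduct, Matrix.of_apply, hd, Pi.zero_apply]
      calc ∑ k, g i (s k) * ∑ j, (if φ j = k then c j else 0)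
          = ∑ k, ∑ j, (if φ j = k then g i (s k) * c j else 0) := by
            refine Finset.sum_congr rfl fun k _ => ?_
            rw [Finset.mul_sum]
            exact Finset.sum_congr rfl fun j _ => by split <;> simp
        _ = ∑ j, ∑ k, (if φ j = k then g i (s k) * c j else 0) := Finset.sum_comm
        _ = ∑ j, g i (s (φ j)) * c j := by
            refine Finset.sum_congr rfl fun j _ => ?_
            rw [Finset.sum_ite_eq Finset.univ (φ j) (fun k => g i (s k) * c j)]
            simp
        _ = ∑ j, α j * σ j * g i (t j) := by
            refine Finset.sum_congr rfl fun j _ => ?_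
            have hst : s (φ j) = t j := by
              have h1 := hφ j
              have h2 : ((e (φ j) : ↥(Set.Icc a b)) : ℝ) = t j := by rw [h1]
              simpa [hs] using h2
            rw [hst, hc, mul_comm]
        _ = 0 := hsum i
    have hd0 : d = 0 := Matrix.eq_zero_of_mulVec_eq_zero hdet hmul
    obtain ⟨j, hj⟩ := hne
    have hcj : c j ≠ 0 := by
      rcases hσ j with h | h <;> simp [hc, h, hj]
    have : d (φ j) = c j := by
      simp only [hd]
      have : ∀ j' : Fin m, (if φ j' = φ j then c j' else 0) = if j' = j then c j' else 0 := by
        intro j'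
        simp [hφinj.eq_iff]
      rw [Finset.sum_congr rfl fun j' _ => this j']
      simp
    rw [hd0] at this
    exact hcj this.symm
  · -- existence for n + 2 points
    set t : Fin (n + 2) → ℝ := fun j => a + (j : ℝ) * ((b - a) / (n + 1)) with htdef
    have hpos : (0 : ℝ) < (b - a) / (n + 1) := div_pos (by linarith) (by positivity)
    have hmono : StrictMono t := by
      intro x y hxy
      simp only [htdef]
      have : (x : ℝ) < (y : ℝ) := by exact_mod_cast hxy
      nlinarith
    have htmem : ∀ j, t j ∈ Set.Icc a b := by
      intro j
      constructor
      · simp only [htdef]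
        have : (0:ℝ) ≤ ((j:ℕ) : ℝ) := Nat.cast_nonneg _
        nlinarith
      · simp only [htdef]
        have hj : (j : ℝ) ≤ (n : ℝ) + 1 := by
          have := j.isLt
          have : (j : ℕ) ≤ n + 1 := by omega
          exact_mod_cast this
        have h1 : (0:ℝ) < (n : ℝ) + 1 := by positivity
        rw [div_eq_mul_inv]
        nlinarith [mul_le_mul_of_nonneg_right hj (le_of_lt (inv_pos.mpr h1)),
          mul_inv_cancel₀ (ne_of_gt h1)]
    -- the n+2 vectors G(t j) in ℝ^{n+1} are linearly dependent
    set v : Fin (n + 2) → (Fin (n + 1) → ℝ) := fun j => fun i => g i (t j) with hv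
    have hnli : ¬ LinearIndependent ℝ v := by
      intro hli
      have h2 := hli.fintype_card_le_finrank
      simp only [Fintype.card_fin, Module.finrank_fintype_fun_eq_card] at h2
      omega
    rw [Fintype.not_linearIndependent_iff] at hnli
    obtain ⟨c, hcsum, j0, hj0⟩ := hnli
    refine ⟨t, htmem, hmono, fun j => |c j|, fun j => if c j < 0 then -1 else 1,
      fun j => abs_nonneg _, ⟨j0, by simpa using hj0⟩, fun j => by by_cases h : c j < 0 <;> simp [h], ?_⟩
    intro i
    have key : ∀ j, |c j| * (if c j < 0 then (-1:ℝ) else 1) * g i (t j) = c j * g i (t j) := by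
      intro j
      by_cases h : c j < 0
      · rw [if_pos h, abs_of_neg h]; ring
      · rw [if_neg h, abs_of_nonneg (not_lt.mp h)]; ring
    simp only [key]
    have := congrFun hcsum i
    simpa [hv, Finset.sum_apply] using this
end
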